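/- arXiv:1707.05556 — 4 statements merged into one kernel-verified Lean document; each statement's English description precedes it below -/
import Mathlib

section
/- Let K be a compact metric space with finite Borel measure μ and let S be a semigroup on L²(K,μ). Suppose S_t L²(K) ⊆ C(K) and S_t* L²(K) ⊆ C(K) for all t > 0. Then for every t > 0 the operator S_t has a continuous kernel: there exists a continuous function k_t : K × K → ℂ such that (S_t u)(x) = ∫_K k_t(x,y) u(y) dμ(y) for almost every x ∈ K and all u ∈ L²(K). -/
/-!
Write `S_t = A ∘ A ∘ A` with `A = S_{t/3}`. By the closed graph theorem `A` and `A†` are bounded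
operators into `C(supp μ)`, so for `x ∈ supp μ` the evaluation `v ↦ (A v)(x)` is `⟪g_x, v⟫` for a
vector `g_x ∈ L²` with `‖g_x‖` bounded and `x ↦ g_x` weakly continuous. By dominated convergence an
operator into `C(supp μ)` sends bounded weakly convergent sequences to norm convergent ones, so
`x ↦ A† g_x` is norm continuous, and `k(x, y) = conj ((A† A† g_x)(y))` is jointly continuous on
`supp μ × supp μ`. Tietze extends it to `K × K`, and
`(S_t u)(x) = ⟪A† A† g_x, u⟫ = ∫ k(x, y) u(y) dμ(y)`.
-/

open MeasureTheory ENNReal Filter Topology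
open scoped InnerProductSpace NNReal ComplexConjugate

namespace MeasureTheory

variable {X : Type*} [MeasurableSpace X] {μ : Measure X}

section DominatedConvergence

variable {E : Type*} [NormedAddCommGroup E] {p : ℝ≥0∞}

theorem unifIntegrable_of_ae_norm_le {ι : Type*} {f : ι → X → E} (hp : 1 ≤ p) (hp' : p ≠ ∞)
    (hf : ∀ i, AEStronglyMeasurable (f i) μ) {C : ℝ} (hC : ∀ i, ∀ᵐ x ∂μ, ‖f i x‖ ≤ C) :
    UnifIntegrable f p μ := by
  refine unifIntegrable_of hp hp' hf fun ε _ ↦ ⟨C.toNNReal + 1, fun i ↦ ?_⟩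
  have hzero : {x | C.toNNReal + 1 ≤ ‖f i x‖₊}.indicator (f i) =ᵐ[μ] 0 := by
    filter_upwards [hC i] with x hx
    have hlt : ‖f i x‖₊ < C.toNNReal + 1 :=
      calc ‖f i x‖₊ = ‖f i x‖.toNNReal := norm_toNNReal.symm
        _ ≤ C.toNNReal := Real.toNNReal_le_toNNReal hx
        _ < C.toNNReal + 1 := lt_add_one _
    exact Set.indicator_of_notMem (s := {x | C.toNNReal + 1 ≤ ‖f i x‖₊}) hlt.not_ge (f i)
  simp [eLpNorm_congr_ae hzero]

theorem Lp.tendsto_of_ae_tendsto_of_norm_le [IsFiniteMeasure μ] [Fact (1 ≤ p)] (hp : p ≠ ∞)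
    {f : ℕ → Lp E p μ} {g : Lp E p μ} {C : ℝ} (hC : ∀ n, ∀ᵐ x ∂μ, ‖f n x‖ ≤ C)
    (hfg : ∀ᵐ x ∂μ, Tendsto (fun n ↦ f n x) atTop (𝓝 (g x))) :
    Tendsto f atTop (𝓝 g) :=
  (Lp.tendsto_Lp_iff_tendsto_eLpNorm' f g).mpr <|
    tendsto_Lp_finite_of_tendsto_ae Fact.out hp (fun _ ↦ Lp.aestronglyMeasurable _) (Lp.memLp g)
      (unifIntegrable_of_ae_norm_le Fact.out hp (fun _ ↦ Lp.aestronglyMeasurable _) hC) hfg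

end DominatedConvergence

end MeasureTheory

section SupportRep

variable {X : Type*} [MeasurableSpace X] {μ : Measure X} [TopologicalSpace X]

instance [CompactSpace X] : CompactSpace μ.support :=
  isCompact_iff_compactSpace.mp Measure.isClosed_support.isCompact

theorem ContinuousMap.eq_of_ae_eq_on_support {F : Type*} [HereditarilyLindelofSpace X]
    [TopologicalSpace F] [T2Space F] {f g : C(μ.support, F)}
    (h : ∀ᵐ x ∂μ, ∀ hx : x ∈ μ.support, f ⟨x, hx⟩ = g ⟨x, hx⟩) : f = g := by
  ext z
  by_contra hne
  obtain ⟨U, hU, hpre⟩ := isOpen_induced_iff.mp (isOpen_ne_fun f.continuous g.continuous)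
  have hzU : z.1 ∈ U := show z ∈ Subtype.val ⁻¹' U from hpre ▸ hne
  refine ((Measure.mem_support_iff_forall z.1).mp z.2 U (hU.mem_nhds hzU)).ne' <|
    measure_mono_null (fun x hxU ↦ ?_) <|
      measure_union_null (ae_iff.mp h) Measure.measure_compl_support
  by_cases hx : x ∈ μ.support
  · have hne : (⟨x, hx⟩ : μ.support) ∈ {z | f z ≠ g z} := hpre ▸ hxU
    exact Or.inl fun hall ↦ hne (hall hx)
  · exact Or.inr hx

namespace ContinuousLinearMap

section Lift

variable {𝕜 E F : Type*} [NontriviallyNormedField 𝕜] [NormedAddCommGroup E] [NormedSpace 𝕜 E]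
  [NormedAddCommGroup F] [NormedSpace 𝕜 F] {p : ℝ≥0∞} [Fact (1 ≤ p)]
  {T : E →L[𝕜] Lp F p μ} (hT : ∀ f, ∃ g : C(X, F), (T f : X → F) =ᵐ[μ] g)
include hT

-- A continuous representative is determined only on the support of `μ`.
noncomputable def continuousRepFun (f : E) : C(μ.support, F) :=
  (hT f).choose.restrict μ.support

theorem ae_eq_continuousRepFun (f : E) :
    ∀ᵐ x ∂μ, ∀ hx : x ∈ μ.support, (T f : X → F) x = continuousRepFun hT f ⟨x, hx⟩ := by
  filter_upwards [(hT f).choose_spec] with x hx _ using hx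

variable [HereditarilyLindelofSpace X]

theorem continuousRepFun_eq_of_ae_eq {f : E} {g : C(μ.support, F)}
    (hg : ∀ᵐ x ∂μ, ∀ hx : x ∈ μ.support, (T f : X → F) x = g ⟨x, hx⟩) :
    continuousRepFun hT f = g :=
  ContinuousMap.eq_of_ae_eq_on_support <| by
    filter_upwards [ae_eq_continuousRepFun hT f, hg] with x hrep hg hx
    rw [← hrep hx, hg hx]

noncomputable def continuousRepₗ : E →ₗ[𝕜] C(μ.support, F) where
  toFun := continuousRepFun hT
  map_add' f g := continuousRepFun_eq_of_ae_eq hT <| by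
    filter_upwards [ae_eq_continuousRepFun hT f, ae_eq_continuousRepFun hT g,
      Lp.coeFn_add (T f) (T g)] with x hf hg hadd hx
    rw [map_add, hadd, Pi.add_apply, hf hx, hg hx]
    rfl
  map_smul' c f := continuousRepFun_eq_of_ae_eq hT <| by
    filter_upwards [ae_eq_continuousRepFun hT f, Lp.coeFn_smul c (T f)] with x hf hsmul hx
    rw [map_smul, hsmul, Pi.smul_apply, hf hx]
    rfl

variable [CompleteSpace E] [CompactSpace X] [CompleteSpace F]

theorem continuous_continuousRepₗ : Continuous (continuousRepₗ hT) := by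
  refine (continuousRepₗ hT).continuous_of_seq_closed_graph fun u f c hu hc ↦ ?_
  refine (continuousRepFun_eq_of_ae_eq hT ?_).symm
  obtain ⟨ns, hns, hlim⟩ :=
    (tendstoInMeasure_of_tendsto_Lp ((T.continuous.tendsto f).comp hu)).exists_seq_tendsto_ae
  filter_upwards [hlim, ae_all_iff.mpr fun n ↦ ae_eq_continuousRepFun hT (u (ns n))]
    with x hx hrep hmem
  refine tendsto_nhds_unique hx <| Tendsto.congr (fun i ↦ (hrep i hmem).symm) ?_
  exact ((continuous_eval_const ⟨x, hmem⟩).tendsto c).comp (hc.comp hns.tendsto_atTop)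

noncomputable def continuousRep : E →L[𝕜] C(μ.support, F) :=
  ⟨continuousRepₗ hT, continuous_continuousRepₗ hT⟩

theorem ae_eq_continuousRep (f : E) :
    ∀ᵐ x ∂μ, ∀ hx : x ∈ μ.support, (T f : X → F) x = continuousRep hT f ⟨x, hx⟩ :=
  ae_eq_continuousRepFun hT f

end Lift

section Hilbert

variable {𝕜 H : Type*} [RCLike 𝕜] [NormedAddCommGroup H] [InnerProductSpace 𝕜 H] [CompleteSpace H]
  [CompactSpace X] [HereditarilyLindelofSpace X] {p : ℝ≥0∞} [Fact (1 ≤ p)]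
  {T : H →L[𝕜] Lp 𝕜 p μ} (hT : ∀ f, ∃ g : C(X, 𝕜), (T f : X → 𝕜) =ᵐ[μ] g)
include hT

noncomputable def rieszEval (x : μ.support) : H :=
  (InnerProductSpace.toDual 𝕜 H).symm ((ContinuousMap.evalCLM 𝕜 x).comp (continuousRep hT))

theorem inner_rieszEval (x : μ.support) (v : H) :
    ⟪rieszEval hT x, v⟫_𝕜 = continuousRep hT v x :=
  InnerProductSpace.toDual_symm_apply

theorem norm_rieszEval_le (x : μ.support) : ‖rieszEval hT x‖ ≤ ‖continuousRep hT‖ := by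
  rw [rieszEval, LinearIsometryEquiv.norm_map]
  refine opNorm_le_bound _ (norm_nonneg _) fun v ↦ ?_
  calc ‖continuousRep hT v x‖ ≤ ‖continuousRep hT v‖ := (continuousRep hT v).norm_coe_le_norm x
    _ ≤ ‖continuousRep hT‖ * ‖v‖ := (continuousRep hT).le_opNorm v

theorem continuous_inner_rieszEval (w : H) : Continuous fun x ↦ ⟪w, rieszEval hT x⟫_𝕜 := by
  refine (RCLike.continuous_conj.comp (continuousRep hT w).continuous).congr fun x ↦ ?_
  rw [Function.comp_apply, ← inner_rieszEval, inner_conj_symm]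

variable [IsFiniteMeasure μ]

theorem tendsto_of_weakly_tendsto (hp : p ≠ ∞) {v : ℕ → H} {w : H} {C : ℝ} (hC : ∀ n, ‖v n‖ ≤ C)
    (hweak : ∀ h, Tendsto (fun n ↦ ⟪h, v n⟫_𝕜) atTop (𝓝 ⟪h, w⟫_𝕜)) :
    Tendsto (fun n ↦ T (v n)) atTop (𝓝 (T w)) := by
  refine Lp.tendsto_of_ae_tendsto_of_norm_le hp (C := ‖continuousRep hT‖ * C) (fun n ↦ ?_) ?_
  · filter_upwards [ae_eq_continuousRep hT (v n), Measure.support_mem_ae] with x hx hmem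
    calc ‖(T (v n) : X → 𝕜) x‖ = ‖continuousRep hT (v n) ⟨x, hmem⟩‖ := by rw [hx hmem]
      _ ≤ ‖continuousRep hT (v n)‖ := (continuousRep hT (v n)).norm_coe_le_norm _
      _ ≤ ‖continuousRep hT‖ * ‖v n‖ := (continuousRep hT).le_opNorm _
      _ ≤ ‖continuousRep hT‖ * C := by gcongr; exact hC n
  · filter_upwards [ae_all_iff.mpr fun n ↦ ae_eq_continuousRep hT (v n),
      ae_eq_continuousRep hT w, Measure.support_mem_ae] with x hv hw hmem
    rw [hw hmem, ← inner_rieszEval]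
    exact (hweak _).congr fun n ↦ by rw [hv n hmem, inner_rieszEval]

theorem continuous_comp_of_weakly_continuous (hp : p ≠ ∞) {Y : Type*} [TopologicalSpace Y]
    [SequentialSpace Y] {v : Y → H} {C : ℝ} (hC : ∀ y, ‖v y‖ ≤ C)
    (hv : ∀ h, Continuous fun y ↦ ⟪h, v y⟫_𝕜) : Continuous fun y ↦ T (v y) :=
  continuous_iff_seqContinuous.mpr fun _ y hy ↦
    tendsto_of_weakly_tendsto hT hp (fun _ ↦ hC _) fun h ↦ ((hv h).tendsto y).comp hy

end Hilbert

end ContinuousLinearMap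

end SupportRep

universe u v in
theorem ContinuousMap.exists_extension_prod {X Y : Type u} {Z : Type v} [TopologicalSpace X]
    [TopologicalSpace Y] [NormalSpace (X × Y)] [TopologicalSpace Z] [TietzeExtension.{u, v} Z]
    {s : Set X} {t : Set Y} (hs : IsClosed s) (ht : IsClosed t) (f : C(s × t, Z)) :
    ∃ g : C(X × Y, Z), ∀ x y (hx : x ∈ s) (hy : y ∈ t), g (x, y) = f (⟨x, hx⟩, ⟨y, hy⟩) := by
  obtain ⟨g, hg⟩ := ContinuousMap.exists_restrict_eq (hs.prod ht)
    (f.comp (Homeomorph.Set.prod s t : C(↑(s ×ˢ t), s × t)))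
  exact ⟨g, fun x y hx hy ↦ DFunLike.congr_fun hg ⟨(x, y), hx, hy⟩⟩

namespace MeasureTheory

variable {𝕜 X : Type*} [RCLike 𝕜] [MeasurableSpace X] {μ : Measure X}

theorem L2.inner_eq_integral_conj_mul (f g : Lp 𝕜 2 μ) :
    ⟪f, g⟫_𝕜 = ∫ y, conj ((f : X → 𝕜) y) * (g : X → 𝕜) y ∂μ := by
  simp only [L2.inner_def, RCLike.inner_apply, mul_comm]

def HasIntegralKernel (T : Lp 𝕜 2 μ →L[𝕜] Lp 𝕜 2 μ) (k : X × X → 𝕜) : Prop :=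
  ∀ u : Lp 𝕜 2 μ, ∀ᵐ x ∂μ, (T u : X → 𝕜) x = ∫ y, k (x, y) * (u : X → 𝕜) y ∂μ

open ContinuousLinearMap in
theorem exists_continuous_kernel_comp [MetricSpace X] [CompactSpace X] [IsFiniteMeasure μ]
    {A C D : Lp 𝕜 2 μ →L[𝕜] Lp 𝕜 2 μ}
    (hA : ∀ f, ∃ g : C(X, 𝕜), (A f : X → 𝕜) =ᵐ[μ] g)
    (hC : ∀ f, ∃ g : C(X, 𝕜), (adjoint C f : X → 𝕜) =ᵐ[μ] g)
    (hD : ∀ f, ∃ g : C(X, 𝕜), (adjoint D f : X → 𝕜) =ᵐ[μ] g) :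
    ∃ k : C(X × X, 𝕜), HasIntegralKernel (A ∘L C ∘L D) k := by
  -- `x ↦ g_x` is only weakly continuous: `C†` makes it norm continuous, and `D†` then makes the
  -- kernel continuous in `y` uniformly in `x`.
  have hΦ : Continuous fun x ↦ adjoint C (rieszEval hA x) :=
    continuous_comp_of_weakly_continuous hC ofNat_ne_top (norm_rieszEval_le hA)
      (continuous_inner_rieszEval hA)
  have hκ : Continuous fun p : μ.support × μ.support ↦
      conj (continuousRep hD (adjoint C (rieszEval hA p.1)) p.2) :=
    RCLike.continuous_conj.comp <| continuous_eval.comp <|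
      (((continuousRep hD).continuous.comp hΦ).comp continuous_fst).prodMk continuous_snd
  obtain ⟨k, hk⟩ := ContinuousMap.exists_extension_prod Measure.isClosed_support
    Measure.isClosed_support ⟨_, hκ⟩
  refine ⟨k, fun u ↦ ?_⟩
  filter_upwards [ae_eq_continuousRep hA (C (D u)), Measure.support_mem_ae] with x hx hmem
  set g := rieszEval hA ⟨x, hmem⟩
  calc (A (C (D u)) : X → 𝕜) x = ⟪g, C (D u)⟫_𝕜 := by rw [hx hmem, inner_rieszEval]
    _ = ⟪adjoint D (adjoint C g), u⟫_𝕜 := by rw [adjoint_inner_left, adjoint_inner_left]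
    _ = ∫ y, k (x, y) * (u : X → 𝕜) y ∂μ := by
      rw [L2.inner_eq_integral_conj_mul]
      refine integral_congr_ae ?_
      filter_upwards [ae_eq_continuousRep hD (adjoint C g), Measure.support_mem_ae] with y hy hmem'
      rw [hy hmem', hk x y hmem hmem']
      rfl

end MeasureTheory

theorem stmt1_general
    {K : Type*} [MetricSpace K] [CompactSpace K] [MeasurableSpace K]
    (μ : Measure K) [IsFiniteMeasure μ]
    (S : ℝ → Lp ℂ 2 μ →L[ℂ] Lp ℂ 2 μ)
    (hsg : ∀ t s : ℝ, 0 < t → 0 < s → S (t + s) = (S t).comp (S s))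
    (h : ∀ t : ℝ, 0 < t →
      (∀ f : Lp ℂ 2 μ, ∃ g : C(K, ℂ), (S t f : K → ℂ) =ᵐ[μ] g) ∧
      (∀ f : Lp ℂ 2 μ, ∃ g : C(K, ℂ), (ContinuousLinearMap.adjoint (S t) f : K → ℂ) =ᵐ[μ] g)) :
    ∀ t : ℝ, 0 < t → ∃ k : C(K × K, ℂ),
      ∀ u : Lp ℂ 2 μ, ∀ᵐ x ∂μ, (S t u : K → ℂ) x = ∫ y, k (x, y) * (u : K → ℂ) y ∂μ := by
  intro t ht
  have hs : 0 < t / 3 := by positivity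
  have hsplit : S t = S (t / 3) ∘L S (t / 3) ∘L S (t / 3) := by
    rw [← hsg _ _ hs hs, ← hsg _ _ hs (by positivity)]
    congr 1
    ring
  obtain ⟨hrange, hrange_adjoint⟩ := h (t / 3) hs
  rw [hsplit]
  exact exists_continuous_kernel_comp hrange hrange_adjoint hrange_adjoint

/-- If `S` is a semigroup on `L²(K,μ)` (`K` compact metric, `μ` finite Borel)
with `S_t L² ⊆ C(K)` and `S_t* L² ⊆ C(K)` for all `t > 0`, then every `S_t` has a continuous
kernel `k_t : K × K → ℂ` with `(S_t u)(x) = ∫ k_t(x,y) u(y) dμ(y)` for a.e. `x`. -/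
theorem stmt1
    {K : Type*} [MetricSpace K] [CompactSpace K] [MeasurableSpace K] [BorelSpace K]
    (μ : Measure K) [IsFiniteMeasure μ]
    (S : ℝ → Lp ℂ 2 μ →L[ℂ] Lp ℂ 2 μ)
    (hsg : ∀ t s : ℝ, 0 < t → 0 < s → S (t + s) = (S t).comp (S s))
    (h : ∀ t : ℝ, 0 < t →
      (∀ f : Lp ℂ 2 μ, ∃ g : C(K, ℂ), (S t f : K → ℂ) =ᵐ[μ] g) ∧
      (∀ f : Lp ℂ 2 μ, ∃ g : C(K, ℂ), (ContinuousLinearMap.adjoint (S t) f : K → ℂ) =ᵐ[μ] g)) :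
    ∀ t : ℝ, 0 < t → ∃ k : C(K × K, ℂ),
      ∀ u : Lp ℂ 2 μ, ∀ᵐ x ∂μ, (S t u : K → ℂ) x = ∫ y, k (x, y) * (u : K → ℂ) y ∂μ :=
  stmt1_general μ S hsg h
end

section
/- Let X be a topological space and, for each z in a compact metric space K with finite Borel measure μ, let h_z : K × K → ℂ be given by h_z(x,y) = f(x,z) g(z,y) where f, g : K × K → ℂ are separately continuous in each variable and uniformly bounded. Then (x,y) ↦ ∫_K f(x,z) g(z,y) dμ(z) is jointly continuous on K × K. -/
open MeasureTheory ENNReal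

theorem continuous_integral_mul_of_separatelyContinuous
    {X Y Z E : Type*} [TopologicalSpace X] [TopologicalSpace Y] [TopologicalSpace Z]
    [FirstCountableTopology X] [FirstCountableTopology Y]
    [MeasurableSpace Z] [OpensMeasurableSpace Z]
    [NormedRing E] [NormedAlgebra ℝ E] [CompleteSpace E] [SecondCountableTopologyEither Z E]
    (μ : Measure Z) [IsFiniteMeasure μ]
    (f : X × Z → E) (g : Z × Y → E) (Cf Cg : ℝ)
    (hfb : ∀ p, ‖f p‖ ≤ Cf) (hgb : ∀ p, ‖g p‖ ≤ Cg)
    (hf_left : ∀ z, Continuous fun x => f (x, z)) (hf_right : ∀ x, Continuous fun z => f (x, z))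
    (hg_left : ∀ y, Continuous fun z => g (z, y)) (hg_right : ∀ z, Continuous fun y => g (z, y)) :
    Continuous fun p : X × Y => ∫ z, f (p.1, z) * g (z, p.2) ∂μ := by
  refine continuous_of_dominated (bound := fun _ => Cf * Cg)
    (fun p => ((hf_right p.1).mul (hg_left p.2)).aestronglyMeasurable)
    (fun p => ae_of_all _ fun z => ?_) (integrable_const _)
    (ae_of_all _ fun z => ((hf_left z).comp continuous_fst).mul ((hg_right z).comp continuous_snd))
  calc ‖f (p.1, z) * g (z, p.2)‖ ≤ ‖f (p.1, z)‖ * ‖g (z, p.2)‖ := norm_mul_le _ _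
    _ ≤ Cf * Cg := mul_le_mul (hfb _) (hgb _) (norm_nonneg _) ((norm_nonneg _).trans (hfb (p.1, z)))

theorem stmt3_general
    {K : Type*} [MetricSpace K] [MeasurableSpace K] [BorelSpace K]
    (μ : Measure K) [IsFiniteMeasure μ]
    (f g : K × K → ℂ) (C : ℝ)
    (hfb : ∀ p : K × K, ‖f p‖ ≤ C) (hgb : ∀ p : K × K, ‖g p‖ ≤ C)
    (hf1 : ∀ y : K, Continuous fun x => f (x, y))
    (hf2 : ∀ x : K, Continuous fun y => f (x, y))
    (hg1 : ∀ y : K, Continuous fun x => g (x, y))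
    (hg2 : ∀ x : K, Continuous fun y => g (x, y)) :
    Continuous fun p : K × K => ∫ z, f (p.1, z) * g (z, p.2) ∂μ :=
  continuous_integral_mul_of_separatelyContinuous μ f g C C hfb hgb hf1 hf2 hg1 hg2

/-- Let `K` be a compact metric space with a finite Borel measure `μ` and let
`f, g : K × K → ℂ` be uniformly bounded and separately continuous in each variable.  Then
`(x,y) ↦ ∫ f(x,z) g(z,y) dμ(z)` is jointly continuous on `K × K`. -/
theorem stmt3
    {K : Type*} [MetricSpace K] [CompactSpace K] [MeasurableSpace K] [BorelSpace K]
    (μ : Measure K) [IsFiniteMeasure μ]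
    (f g : K × K → ℂ) (C : ℝ)
    (hfb : ∀ p : K × K, ‖f p‖ ≤ C) (hgb : ∀ p : K × K, ‖g p‖ ≤ C)
    (hf1 : ∀ y : K, Continuous fun x => f (x, y))
    (hf2 : ∀ x : K, Continuous fun y => f (x, y))
    (hg1 : ∀ y : K, Continuous fun x => g (x, y))
    (hg2 : ∀ x : K, Continuous fun y => g (x, y)) :
    Continuous fun p : K × K => ∫ z, f (p.1, z) * g (z, p.2) ∂μ :=
  stmt3_general μ f g C hfb hgb hf1 hf2 hg1 hg2
end

section
/- Let K be a compact connected metric space and μ a finite Borel measure on K with supp μ = K. Let S be a positive C₀-semigroup on L²(K,μ) with self-adjoint generator −A such that S_t L²(K) ⊆ C(K) for all t > 0, and let S^c_t = S_t|_{C(K)}. If for all x ∈ K there exist t > 0 and f ∈ C(K) with (S^c_t f)(x) ≠ 0, then the semigroup S^c on C(K) is irreducible. -/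
open MeasureTheory ENNReal Filter

/-!
Fix `t > 0` and let `s = t / 2`. By the closed graph theorem `S_s` is bounded as an operator
`L² → C(K)`, so each point evaluation `h ↦ (S_s h)(y)` is represented by some `k_y ∈ L²`, and
self-adjointness gives `(S_t f)(y) = ∫ w y · f dμ` with the continuous symmetric kernel
`w y z = ⟪k_z, k_y⟫ = (S_s k_y)(z)`. If the ideal of functions vanishing on `B` is invariant, then
testing against `f = φ · w y`, with `φ ≥ 0` an Urysohn function vanishing on `B`, shows that
`w y` vanishes on `closure Bᶜ` for every `y ∈ B`. By connectedness `B` has a boundary point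
`x ∈ B ∩ closure Bᶜ`, and by symmetry `w x` vanishes on `B` too; so `S_t f` vanishes at `x` for
every `f`, contradicting the nondegeneracy hypothesis.
-/

open RealInnerProductSpace

theorem IsClosed.exists_mem_closure_compl {X : Type*} [TopologicalSpace X] [PreconnectedSpace X]
    {B : Set X} (hB : IsClosed B) (hBne : B.Nonempty) (hBuniv : B ≠ Set.univ) :
    ∃ x ∈ B, x ∈ closure Bᶜ := by
  have hx := nonempty_frontier_iff.2 ⟨hBne, hBuniv⟩
  rwa [frontier_eq_closure_inter_closure, hB.closure_eq] at hx

theorem ContinuousLinearMap.exists_comp_eq_of_injective {𝕜 E F G : Type*}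
    [NontriviallyNormedField 𝕜] [NormedAddCommGroup E] [NormedSpace 𝕜 E] [CompleteSpace E]
    [NormedAddCommGroup F] [NormedSpace 𝕜 F] [CompleteSpace F]
    [NormedAddCommGroup G] [NormedSpace 𝕜 G]
    (j : F →L[𝕜] G) (hj : Function.Injective j) (S : E →L[𝕜] G) (hS : ∀ e, ∃ f, j f = S e) :
    ∃ T : E →L[𝕜] F, j.comp T = S := by
  choose T hT using hS
  have hT_add : ∀ e₁ e₂, T (e₁ + e₂) = T e₁ + T e₂ := fun e₁ e₂ => hj <| by simp [hT]
  have hT_smul : ∀ (c : 𝕜) e, T (c • e) = c • T e := fun c e => hj <| by simp [hT]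
  let Tₗ : E →ₗ[𝕜] F := ⟨⟨T, hT_add⟩, hT_smul⟩
  refine ⟨ContinuousLinearMap.ofSeqClosedGraph (g := Tₗ) fun u e f hu hTu => hj ?_, ?_⟩
  · have hjTu : Tendsto (fun n => j (T (u n))) atTop (nhds (j f)) :=
      (j.continuous.tendsto f).comp hTu
    simp only [hT] at hjTu
    exact (tendsto_nhds_unique hjTu ((S.continuous.tendsto e).comp hu)).trans (hT e).symm
  · ext e
    exact hT e

section PointKernel

variable {H K : Type*} [NormedAddCommGroup H] [InnerProductSpace ℝ H] [CompleteSpace H]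
  [TopologicalSpace K]

noncomputable def pointKernel (T : H →L[ℝ] C(K, ℝ)) (y : K) : H :=
  (InnerProductSpace.toDual ℝ H).symm ((ContinuousMap.evalCLM ℝ y).comp T)

theorem inner_pointKernel (T : H →L[ℝ] C(K, ℝ)) (y : K) (h : H) :
    ⟪pointKernel T y, h⟫ = T h y :=
  InnerProductSpace.toDual_symm_apply

theorem apply_pointKernel_comm (T : H →L[ℝ] C(K, ℝ)) (y z : K) :
    T (pointKernel T y) z = T (pointKernel T z) y := by
  rw [← inner_pointKernel, ← inner_pointKernel, real_inner_comm]

theorem apply_pointKernel_eq_zero_of_mem_closure_compl {T : H →L[ℝ] C(K, ℝ)} {B : Set K}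
    (hB : ∀ y ∈ B, Set.EqOn (T (pointKernel T y)) 0 (closure Bᶜ)) {x : K} (hxB : x ∈ B)
    (hxBc : x ∈ closure Bᶜ) : T (pointKernel T x) = 0 := by
  ext z
  by_cases hz : z ∈ B
  · rw [apply_pointKernel_comm]
    exact hB z hz hxBc
  · exact hB x hxB (subset_closure hz)

end PointKernel

section ContinuousFunctionsInL2

variable {K : Type*} [TopologicalSpace K] [CompactSpace K] [MeasurableSpace K] [BorelSpace K]
  {μ : Measure K} [IsFiniteMeasure μ]

theorem ContinuousMap.toLp_eq_iff_ae_eq {p : ℝ≥0∞} [Fact (1 ≤ p)] (g : C(K, ℝ))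
    (f : Lp ℝ p μ) : ContinuousMap.toLp p μ ℝ g = f ↔ (f : K → ℝ) =ᵐ[μ] g := by
  rw [Lp.ext_iff]
  exact ⟨fun h => h.symm.trans (g.coeFn_toLp μ), fun h => (g.coeFn_toLp μ).trans h.symm⟩

theorem apply_comp_eq_integral_pointKernel_mul {T : Lp ℝ 2 μ →L[ℝ] C(K, ℝ)}
    {P : Lp ℝ 2 μ →L[ℝ] Lp ℝ 2 μ} (hP : IsSelfAdjoint P)
    (hT : (ContinuousMap.toLp 2 μ ℝ).comp T = P) (f : C(K, ℝ)) (y : K) :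
    T (P (ContinuousMap.toLp 2 μ ℝ f)) y = ∫ a, T (pointKernel T y) a * f a ∂μ := by
  have hP_toLp : ∀ h, ContinuousMap.toLp 2 μ ℝ (T h) = P h := fun h => by rw [← hT]; rfl
  rw [← inner_pointKernel, ← ContinuousLinearMap.coe_coe P, ← hP.isSymmetric, real_inner_comm,
    ContinuousLinearMap.coe_coe, ← hP_toLp, ContinuousMap.inner_toLp]
  simp

theorem eqOn_closure_compl_zero_of_integral_mul_eq_zero [T4Space K] [μ.IsOpenPosMeasure]
    {B : Set K} (hB : IsClosed B) (w : C(K, ℝ))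
    (hw : ∀ f : C(K, ℝ), (∀ x ∈ B, f x = 0) → ∫ a, w a * f a ∂μ = 0) :
    Set.EqOn w 0 (closure Bᶜ) := by
  refine Set.EqOn.closure (fun z hz => ?_) w.continuous continuous_const
  by_contra hwz
  obtain ⟨φ, hφB, hφz, hφ01⟩ := exists_continuous_zero_one_of_isClosed hB isClosed_singleton
    (Set.disjoint_singleton_right.2 hz)
  have hpos : 0 < ∫ a, w a * (φ * w) a ∂μ := by
    refine (w * (φ * w)).continuous.integral_pos_of_hasCompactSupport_nonneg_nonzero
      (HasCompactSupport.of_compactSpace _) (fun a => ?_) (x := z) ?_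
    · simpa [mul_left_comm] using mul_nonneg (hφ01 a).1 (mul_self_nonneg (w a))
    · simpa [hφz rfl] using hwz
  exact hpos.ne' (hw _ fun x hx => by simp [hφB hx])

end ContinuousFunctionsInL2

theorem stmt4_general
    {K : Type*} [MetricSpace K] [CompactSpace K] [ConnectedSpace K]
    [MeasurableSpace K] [BorelSpace K]
    (μ : Measure K) [IsFiniteMeasure μ]
    (hsupp : ∀ U : Set K, IsOpen U → U.Nonempty → 0 < μ U)
    (S : ℝ → Lp ℝ 2 μ →L[ℝ] Lp ℝ 2 μ)
    (hsg : ∀ t s : ℝ, 0 < t → 0 < s → S (t + s) = (S t).comp (S s))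
    (hsa : ∀ t : ℝ, 0 < t → IsSelfAdjoint (S t))
    (hreg : ∀ t : ℝ, 0 < t → ∀ f : Lp ℝ 2 μ, ∃ g : C(K, ℝ), (S t f : K → ℝ) =ᵐ[μ] g)
    (hnondeg : ∀ x : K, ∃ t : ℝ, 0 < t ∧ ∃ f g : C(K, ℝ),
      (S t (ContinuousMap.toLp 2 μ ℝ f) : K → ℝ) =ᵐ[μ] g ∧ g x ≠ 0) :
    ∀ B : Set K, IsClosed B → B.Nonempty → B ≠ Set.univ →
      ¬ (∀ t : ℝ, 0 < t → ∀ f : C(K, ℝ), (∀ x ∈ B, f x = 0) →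
          ∀ g : C(K, ℝ), (S t (ContinuousMap.toLp 2 μ ℝ f) : K → ℝ) =ᵐ[μ] g →
          ∀ x ∈ B, g x = 0) := by
  intro B hB hBne hBuniv hinv
  have : μ.IsOpenPosMeasure := ⟨fun U hU hne => (hsupp U hU hne).ne'⟩
  obtain ⟨x, hxB, hxBc⟩ := hB.exists_mem_closure_compl hBne hBuniv
  obtain ⟨t, ht, f₀, g₀, hf₀g₀, hg₀x⟩ := hnondeg x
  have hs : 0 < t / 2 := half_pos ht
  obtain ⟨T, hT⟩ := (ContinuousMap.toLp 2 μ ℝ).exists_comp_eq_of_injective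
    (ContinuousMap.toLp_injective μ) (S (t / 2)) fun h => (hreg _ hs h).imp fun g hg =>
      (ContinuousMap.toLp_eq_iff_ae_eq g _).2 hg
  have hSt : ∀ f : C(K, ℝ), ContinuousMap.toLp 2 μ ℝ (T (S (t / 2) (ContinuousMap.toLp 2 μ ℝ f)))
      = S t (ContinuousMap.toLp 2 μ ℝ f) := fun f => by
    rw [← ContinuousLinearMap.comp_apply, hT, ← ContinuousLinearMap.comp_apply, ← hsg _ _ hs hs,
      add_halves]
  have hkernel := apply_comp_eq_integral_pointKernel_mul (hsa _ hs) hT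
  have hkernel_x : T (pointKernel T x) = 0 := by
    refine apply_pointKernel_eq_zero_of_mem_closure_compl (fun y hy => ?_) hxB hxBc
    refine eqOn_closure_compl_zero_of_integral_mul_eq_zero (μ := μ) hB _ fun f hf => ?_
    rw [← hkernel]
    exact hinv t ht f hf _ ((ContinuousMap.toLp_eq_iff_ae_eq _ _).1 (hSt f)) y hy
  have hg₀ : g₀ = T (S (t / 2) (ContinuousMap.toLp 2 μ ℝ f₀)) :=
    ContinuousMap.toLp_injective μ (p := 2) (𝕜 := ℝ) <| by
      rwa [hSt, ContinuousMap.toLp_eq_iff_ae_eq]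
  apply hg₀x
  rw [hg₀, hkernel, hkernel_x]
  simp

/-- Let `K` be a compact connected metric space, `μ` a finite Borel measure
with full support.  Let `S` be a positive `C₀`-semigroup on `L²(K,μ)` with self-adjoint
generator, such that `S_t L² ⊆ C(K)` for all `t > 0`.  If for every `x ∈ K` there are `t > 0`
and `f ∈ C(K)` with `(S^c_t f)(x) ≠ 0`, then the restricted semigroup `S^c` on `C(K)` is
irreducible: no closed ideal `{f ∈ C(K) : f|_B = 0}`, with `B` closed, `∅ ≠ B ≠ K`, is
invariant under all `S^c_t`. -/
theorem stmt4
    {K : Type*} [MetricSpace K] [CompactSpace K] [ConnectedSpace K]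
    [MeasurableSpace K] [BorelSpace K]
    (μ : Measure K) [IsFiniteMeasure μ]
    (hsupp : ∀ U : Set K, IsOpen U → U.Nonempty → 0 < μ U)
    (S : ℝ → Lp ℝ 2 μ →L[ℝ] Lp ℝ 2 μ)
    (hsg : ∀ t s : ℝ, 0 < t → 0 < s → S (t + s) = (S t).comp (S s))
    (hc0 : ∀ f : Lp ℝ 2 μ, Tendsto (fun t => S t f) (nhdsWithin 0 (Set.Ioi 0)) (nhds f))
    (hsa : ∀ t : ℝ, 0 < t → IsSelfAdjoint (S t))
    (hpos : ∀ t : ℝ, 0 < t → ∀ f : Lp ℝ 2 μ, 0 ≤ f → 0 ≤ S t f)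
    (hreg : ∀ t : ℝ, 0 < t → ∀ f : Lp ℝ 2 μ, ∃ g : C(K, ℝ), (S t f : K → ℝ) =ᵐ[μ] g)
    (hnondeg : ∀ x : K, ∃ t : ℝ, 0 < t ∧ ∃ f g : C(K, ℝ),
      (S t (ContinuousMap.toLp 2 μ ℝ f) : K → ℝ) =ᵐ[μ] g ∧ g x ≠ 0) :
    ∀ B : Set K, IsClosed B → B.Nonempty → B ≠ Set.univ →
      ¬ (∀ t : ℝ, 0 < t → ∀ f : C(K, ℝ), (∀ x ∈ B, f x = 0) →
          ∀ g : C(K, ℝ), (S t (ContinuousMap.toLp 2 μ ℝ f) : K → ℝ) =ᵐ[μ] g →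
          ∀ x ∈ B, g x = 0) :=
  stmt4_general μ hsupp S hsg hsa hreg hnondeg
end

section
/- Let Ω ⊂ ℝ^d be bounded open connected with Lipschitz boundary Γ, with the standing assumptions making the Dirichlet-to-Neumann semigroup S^V on L²(Γ) positive, with S^V_t L²(Γ) ⊆ C(Γ) for all t > 0, with a strictly positive continuous first eigenfunction φ₁ (min_Γ φ₁ > 0, D_V φ₁ = λ₁ φ₁), and with S^V irreducible on L²(Γ). Then the restriction T^V of S^V to C(Γ) is irreducible: there is no closed subset Γ₁ ⊆ Γ with ∅ ≠ Γ₁ ≠ Γ such that {φ ∈ C(Γ) : φ|_{Γ₁} = 0} is invariant under all T^V_t. -/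
/-! The continuous representatives of `S t` form a bounded operator `R t : L²(Γ) → C(Γ)` by the
closed graph theorem. Multiplying by the cutoffs `min (n · dist(·, Γ₁)) 1` and using dominated
convergence, every `f ∈ L²` vanishing a.e. on `Γ₁` is an `L²`-limit of continuous functions
vanishing on `Γ₁`; so invariance of the ideal of `C(Γ)` forces `R t f` to vanish on `Γ₁` for all
such `f`. Hence the ideal `{f = 0 a.e. on Γ₁}` of `L²` is invariant, and since `Γ₁ᶜ` is open and
nonempty, irreducibility gives `μ Γ₁ = 0`. But then `φ₁` lies in that ideal, whereas
`R 1 φ₁ = e^{-λ₁} φ₁` is positive on `Γ₁ ≠ ∅`. -/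

open MeasureTheory ENNReal Filter Topology Metric

lemma unifIntegrable_of_norm_le {ι α β : Type*} {m : MeasurableSpace α} {μ : Measure α}
    [NormedAddCommGroup β] {p : ℝ≥0∞} (hp : 1 ≤ p) (hp' : p ≠ ∞) {f : ι → α → β} {g : α → β}
    (hg : MemLp g p μ) (hfg : ∀ i, ∀ᵐ x ∂μ, ‖f i x‖ ≤ ‖g x‖) : UnifIntegrable f p μ := by
  intro ε hε
  obtain ⟨δ, hδ, hgδ⟩ := hg.eLpNorm_indicator_le hp hp' hε
  refine ⟨δ, hδ, fun i s hs hμs => (eLpNorm_mono_ae ?_).trans (hgδ s hs hμs)⟩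
  filter_upwards [hfg i] with x hx
  by_cases hxs : x ∈ s <;> simp [hxs, hx]

section Cutoff

variable {X : Type*} [PseudoMetricSpace X]

noncomputable def cutoff (K : Set X) (n : ℕ) : C(X, ℝ) :=
  ⟨fun z => min (n * infDist z K) 1, by fun_prop⟩

variable {K : Set X}

lemma cutoff_eq_zero_of_mem (n : ℕ) {z : X} (hz : z ∈ K) : cutoff K n z = 0 := by
  simp [cutoff, infDist_zero_of_mem hz]

lemma abs_cutoff_le_one (n : ℕ) (z : X) : |cutoff K n z| ≤ 1 := by
  have hnonneg : 0 ≤ min (n * infDist z K) 1 :=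
    le_min (mul_nonneg n.cast_nonneg infDist_nonneg) zero_le_one
  exact (abs_of_nonneg hnonneg).trans_le (min_le_right _ _)

lemma tendsto_cutoff_of_notMem (hK : IsClosed K) (hKne : K.Nonempty) {z : X} (hz : z ∉ K) :
    Tendsto (fun n => cutoff K n z) atTop (𝓝 1) := by
  have hd : 0 < infDist z K := (hK.notMem_iff_infDist_pos hKne).mp hz
  refine tendsto_const_nhds.congr' ?_
  filter_upwards [(tendsto_natCast_atTop_atTop.atTop_mul_const hd).eventually_ge_atTop 1]
    with n hn
  exact (min_eq_right hn).symm

end Cutoff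

section MulLp

variable {X : Type*} [TopologicalSpace X] [CompactSpace X] [MeasurableSpace X] [BorelSpace X]
  {μ : Measure X} [IsFiniteMeasure μ] {p : ℝ≥0∞} [Fact (1 ≤ p)]

variable (μ p) in
noncomputable def mulLp (χ : C(X, ℝ)) : Lp ℝ p μ →L[ℝ] Lp ℝ p μ :=
  (ContinuousLinearMap.mul ℝ ℝ).holderL μ ∞ p p (ContinuousMap.toLp ∞ μ ℝ χ)

lemma coeFn_mulLp (χ : C(X, ℝ)) (f : Lp ℝ p μ) :
    mulLp μ p χ f =ᵐ[μ] fun x => χ x * f x := by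
  filter_upwards [(ContinuousLinearMap.mul ℝ ℝ).coeFn_holder (r := p)
    (ContinuousMap.toLp ∞ μ ℝ χ) f, ContinuousMap.coeFn_toLp (p := ∞) (𝕜 := ℝ) μ χ] with x h1 h2
  rw [mulLp, ContinuousLinearMap.holderL_apply_apply, h1, h2]
  rfl

lemma mulLp_toLp (χ h : C(X, ℝ)) :
    mulLp μ p χ (ContinuousMap.toLp p μ ℝ h) = ContinuousMap.toLp p μ ℝ (χ * h) := by
  refine Lp.ext ?_
  filter_upwards [coeFn_mulLp χ (ContinuousMap.toLp p μ ℝ h),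
    ContinuousMap.coeFn_toLp (p := p) (𝕜 := ℝ) μ h,
    ContinuousMap.coeFn_toLp (p := p) (𝕜 := ℝ) μ (χ * h)] with x h1 h2 h3
  rw [h1, h2, h3, ContinuousMap.mul_apply]

end MulLp

section ContinuousRepresentative

variable {X : Type*} [TopologicalSpace X] [CompactSpace X] [MeasurableSpace X] [BorelSpace X]
  {μ : Measure X} [IsFiniteMeasure μ] [μ.IsOpenPosMeasure] {p q : ℝ≥0∞} [Fact (1 ≤ p)]
  [Fact (1 ≤ q)]

lemma exists_continuousLinearMap_toLp_eq (A : Lp ℝ p μ →L[ℝ] Lp ℝ q μ)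
    (hA : ∀ f, ∃ g : C(X, ℝ), A f =ᵐ[μ] g) :
    ∃ R : Lp ℝ p μ →L[ℝ] C(X, ℝ), ∀ f, ContinuousMap.toLp q μ ℝ (R f) = A f := by
  set T := ContinuousMap.toLp (E := ℝ) q μ ℝ
  have hT : Function.Injective T := ContinuousMap.toLp_injective μ
  have hrange : ∀ f, A f ∈ LinearMap.range T.toLinearMap := fun f => by
    obtain ⟨g, hg⟩ := hA f
    exact ⟨g, Lp.ext ((ContinuousMap.coeFn_toLp μ g).trans hg.symm)⟩
  let R : Lp ℝ p μ →ₗ[ℝ] C(X, ℝ) := (LinearEquiv.ofInjective T.toLinearMap hT).symm.toLinearMap ∘ₗ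
    A.toLinearMap.codRestrict _ hrange
  have hTR : ∀ f, T (R f) = A f := fun f =>
    congrArg Subtype.val ((LinearEquiv.ofInjective _ hT).apply_symm_apply _)
  refine ⟨.ofSeqClosedGraph (g := R) fun u x y hux huy => hT ?_, hTR⟩
  rw [hTR]
  exact tendsto_nhds_unique (((T.continuous.tendsto y).comp huy).congr fun n => hTR (u n))
    ((A.continuous.tendsto x).comp hux)

end ContinuousRepresentative

section Density

variable {X : Type*} [MetricSpace X] [CompactSpace X] [MeasurableSpace X] [BorelSpace X]
  {μ : Measure X} [IsFiniteMeasure μ] {p : ℝ≥0∞} [Fact (1 ≤ p)] {K : Set X}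

lemma tendsto_mulLp_cutoff (hp : p ≠ ∞) (hK : IsClosed K) (hKne : K.Nonempty) (f : Lp ℝ p μ)
    (hf : ∀ᵐ x ∂μ, x ∈ K → f x = 0) :
    Tendsto (fun n => mulLp μ p (cutoff K n) f) atTop (𝓝 f) := by
  rw [Lp.tendsto_Lp_iff_tendsto_eLpNorm']
  have hcongr : ∀ n, eLpNorm (⇑(mulLp μ p (cutoff K n) f) - ⇑f) p μ =
      eLpNorm ((fun x => cutoff K n x * f x) - ⇑f) p μ :=
    fun n => eLpNorm_congr_ae ((coeFn_mulLp _ f).sub EventuallyEq.rfl)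
  simp_rw [hcongr]
  refine tendsto_Lp_finite_of_tendsto_ae Fact.out hp
    (fun n => (cutoff K n).continuous.aestronglyMeasurable.mul (Lp.aestronglyMeasurable f))
    (Lp.memLp f) (unifIntegrable_of_norm_le Fact.out hp (Lp.memLp f) fun n => ?_) ?_
  · filter_upwards with x
    rw [norm_mul, Real.norm_eq_abs (cutoff K n x)]
    exact mul_le_of_le_one_left (norm_nonneg _) (abs_cutoff_le_one n x)
  · filter_upwards [hf] with x hx
    by_cases hxK : x ∈ K
    · simp [hx hxK]
    · simpa using (tendsto_cutoff_of_notMem hK hKne hxK).mul_const (f x)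

lemma mem_closure_toLp_vanishing (hp : p ≠ ∞) (hK : IsClosed K) (hKne : K.Nonempty)
    (f : Lp ℝ p μ) (hf : ∀ᵐ x ∂μ, x ∈ K → f x = 0) :
    f ∈ closure (ContinuousMap.toLp p μ ℝ '' {h : C(X, ℝ) | ∀ z ∈ K, h z = 0}) := by
  refine isClosed_closure.mem_of_tendsto (tendsto_mulLp_cutoff hp hK hKne f hf)
    (Eventually.of_forall fun n => ?_)
  refine map_mem_closure (mulLp μ p (cutoff K n)).continuous
    (ContinuousMap.toLp_denseRange ℝ μ ℝ hp f) ?_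
  rintro _ ⟨h, rfl⟩
  refine ⟨cutoff K n * h, fun z hz => ?_, (mulLp_toLp _ _).symm⟩
  simp [cutoff_eq_zero_of_mem n hz]

lemma eq_zero_on_of_ae_eq_zero_on (hp : p ≠ ∞) (hK : IsClosed K) (hKne : K.Nonempty)
    (R : Lp ℝ p μ →L[ℝ] C(X, ℝ))
    (hR : ∀ h : C(X, ℝ), (∀ z ∈ K, h z = 0) → ∀ z ∈ K, R (ContinuousMap.toLp p μ ℝ h) z = 0)
    {f : Lp ℝ p μ} (hf : ∀ᵐ x ∂μ, x ∈ K → f x = 0) : ∀ z ∈ K, R f z = 0 := by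
  have hclosed : IsClosed {f : Lp ℝ p μ | ∀ z ∈ K, R f z = 0} := by
    simp only [Set.ofPred_forall]
    exact isClosed_biInter fun z _ =>
      isClosed_eq ((continuous_eval_const z).comp R.continuous) continuous_const
  refine closure_minimal ?_ hclosed (mem_closure_toLp_vanishing hp hK hKne f hf)
  rintro _ ⟨h, hh, rfl⟩
  exact hR h hh

end Density

theorem stmt19_general
    {Γ : Type*} [MetricSpace Γ] [CompactSpace Γ] [MeasurableSpace Γ] [BorelSpace Γ]
    (μ : Measure Γ) [IsFiniteMeasure μ]
    (hsupp : ∀ U : Set Γ, IsOpen U → U.Nonempty → 0 < μ U)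
    (S : ℝ → Lp ℝ 2 μ →L[ℝ] Lp ℝ 2 μ)
    (hreg : ∀ t : ℝ, 0 < t → ∀ f : Lp ℝ 2 μ, ∃ g : C(Γ, ℝ), (S t f : Γ → ℝ) =ᵐ[μ] g)
    (φ₁ : C(Γ, ℝ)) (lam : ℝ)
    (hφ₁pos : ∀ z : Γ, 0 < φ₁ z)
    (hφ₁eig : ∀ t : ℝ, 0 < t →
      S t (ContinuousMap.toLp 2 μ ℝ φ₁) = Real.exp (-(lam * t)) • ContinuousMap.toLp 2 μ ℝ φ₁)
    -- `S^V` is irreducible on `L²(Γ)`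
    (hirrL2 : ∀ Y₁ : Set Γ, MeasurableSet Y₁ →
      (∀ t : ℝ, 0 < t → ∀ f : Lp ℝ 2 μ,
        (∀ᵐ z ∂μ, z ∉ Y₁ → (f : Γ → ℝ) z = 0) →
        (∀ᵐ z ∂μ, z ∉ Y₁ → (S t f : Γ → ℝ) z = 0)) →
      μ Y₁ = 0 ∨ μ Y₁ᶜ = 0) :
    ∀ Γ₁ : Set Γ, IsClosed Γ₁ → Γ₁.Nonempty → Γ₁ ≠ Set.univ →
      ¬ (∀ t : ℝ, 0 < t → ∀ f : C(Γ, ℝ), (∀ z ∈ Γ₁, f z = 0) →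
          ∀ g : C(Γ, ℝ), (S t (ContinuousMap.toLp 2 μ ℝ f) : Γ → ℝ) =ᵐ[μ] g →
          ∀ z ∈ Γ₁, g z = 0) := by
  intro Γ₁ hΓ₁ hne huniv hinv
  have : μ.IsOpenPosMeasure := ⟨fun U hU hUne => (hsupp U hU hUne).ne'⟩
  choose R hR using fun t (ht : 0 < t) => exists_continuousLinearMap_toLp_eq (S t) (hreg t ht)
  have hSR : ∀ t ht f, (S t f : Γ → ℝ) =ᵐ[μ] R t ht f := fun t ht f => by
    rw [← hR t ht f]
    exact ContinuousMap.coeFn_toLp μ _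
  have hvanish : ∀ t (ht : 0 < t) (f : Lp ℝ 2 μ), (∀ᵐ z ∂μ, z ∈ Γ₁ → f z = 0) →
      ∀ z ∈ Γ₁, R t ht f z = 0 := fun t ht f hf =>
    eq_zero_on_of_ae_eq_zero_on ofNat_ne_top hΓ₁ hne (R t ht)
      (fun h hh => hinv t ht h hh _ (hSR t ht _)) hf
  have hnull : μ Γ₁ = 0 := by
    have hinvL2 : ∀ t, 0 < t → ∀ f : Lp ℝ 2 μ, (∀ᵐ z ∂μ, z ∉ Γ₁ᶜ → f z = 0) →
        ∀ᵐ z ∂μ, z ∉ Γ₁ᶜ → S t f z = 0 := fun t ht f hf => by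
      simp_rw [Set.notMem_compl_iff] at hf ⊢
      filter_upwards [hSR t ht f] with z hz hzΓ₁
      rw [hz, hvanish t ht f hf z hzΓ₁]
    simpa using (hirrL2 Γ₁ᶜ hΓ₁.measurableSet.compl hinvL2).resolve_left
      (hsupp _ hΓ₁.isOpen_compl (Set.nonempty_compl.2 huniv)).ne'
  have hRφ₁ : R 1 one_pos (ContinuousMap.toLp 2 μ ℝ φ₁) = Real.exp (-(lam * 1)) • φ₁ := by
    apply ContinuousMap.toLp_injective μ (p := 2) (𝕜 := ℝ)
    rw [hR, hφ₁eig 1 one_pos, map_smul]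
  obtain ⟨x₀, hx₀⟩ := hne
  have hφ₁x₀ := hvanish 1 one_pos (ContinuousMap.toLp 2 μ ℝ φ₁)
    ((measure_eq_zero_iff_ae_notMem.1 hnull).mono fun z hz hzΓ₁ => absurd hzΓ₁ hz) x₀ hx₀
  rw [hRφ₁, ContinuousMap.smul_apply, smul_eq_mul] at hφ₁x₀
  exact (mul_pos (Real.exp_pos _) (hφ₁pos x₀)).ne' hφ₁x₀

/-- Let `Γ` be the (compact metric) boundary, with finite Borel measure of
full support.  Let `S^V` be the positive `C₀`-semigroup generated by `−D_V` on `L²(Γ)`, with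
`S^V_t L²(Γ) ⊆ C(Γ)` for all `t > 0`, with a strictly positive continuous first eigenfunction
`φ₁` (`S^V_t φ₁ = e^{-λ₁ t} φ₁`, `min φ₁ > 0`), and with `S^V` irreducible on `L²(Γ)`.
Then the restriction `T^V` of `S^V` to `C(Γ)` is irreducible: there is no closed
`Γ₁ ⊆ Γ` with `∅ ≠ Γ₁ ≠ Γ` such that `{φ ∈ C(Γ) : φ|_{Γ₁} = 0}` is invariant under all
`T^V_t`. -/
theorem stmt19
    {Γ : Type*} [MetricSpace Γ] [CompactSpace Γ] [MeasurableSpace Γ] [BorelSpace Γ]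
    (μ : Measure Γ) [IsFiniteMeasure μ]
    (hsupp : ∀ U : Set Γ, IsOpen U → U.Nonempty → 0 < μ U)
    (S : ℝ → Lp ℝ 2 μ →L[ℝ] Lp ℝ 2 μ)
    (hsg : ∀ t s : ℝ, 0 < t → 0 < s → S (t + s) = (S t).comp (S s))
    (hc0 : ∀ f : Lp ℝ 2 μ, Tendsto (fun t => S t f) (nhdsWithin 0 (Set.Ioi 0)) (nhds f))
    (hsa : ∀ t : ℝ, 0 < t → IsSelfAdjoint (S t))
    (hpos : ∀ t : ℝ, 0 < t → ∀ f : Lp ℝ 2 μ, 0 ≤ f → 0 ≤ S t f)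
    (hreg : ∀ t : ℝ, 0 < t → ∀ f : Lp ℝ 2 μ, ∃ g : C(Γ, ℝ), (S t f : Γ → ℝ) =ᵐ[μ] g)
    (φ₁ : C(Γ, ℝ)) (lam : ℝ)
    (hφ₁pos : ∀ z : Γ, 0 < φ₁ z)
    (hφ₁eig : ∀ t : ℝ, 0 < t →
      S t (ContinuousMap.toLp 2 μ ℝ φ₁) = Real.exp (-(lam * t)) • ContinuousMap.toLp 2 μ ℝ φ₁)
    -- `S^V` is irreducible on `L²(Γ)`
    (hirrL2 : ∀ Y₁ : Set Γ, MeasurableSet Y₁ →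
      (∀ t : ℝ, 0 < t → ∀ f : Lp ℝ 2 μ,
        (∀ᵐ z ∂μ, z ∉ Y₁ → (f : Γ → ℝ) z = 0) →
        (∀ᵐ z ∂μ, z ∉ Y₁ → (S t f : Γ → ℝ) z = 0)) →
      μ Y₁ = 0 ∨ μ Y₁ᶜ = 0) :
    ∀ Γ₁ : Set Γ, IsClosed Γ₁ → Γ₁.Nonempty → Γ₁ ≠ Set.univ →
      ¬ (∀ t : ℝ, 0 < t → ∀ f : C(Γ, ℝ), (∀ z ∈ Γ₁, f z = 0) →
          ∀ g : C(Γ, ℝ), (S t (ContinuousMap.toLp 2 μ ℝ f) : Γ → ℝ) =ᵐ[μ] g →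
          ∀ z ∈ Γ₁, g z = 0) :=
  stmt19_general μ hsupp S hreg φ₁ lam hφ₁pos hφ₁eig hirrL2
end
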